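/- arXiv:1107.0684 — 2 statements merged into one kernel-verified Lean document; each statement's English description precedes it below -/
import Mathlib

section
/- Let ℓ₁ and ℓ₂ be distinct positive integers and let ℓ = 2(ℓ₁ + ℓ₂). Then S(ℓ₁) + S(ℓ₂) − 1 ≤ (1/2)·S(ℓ) if and only if S(ℓ₁) = S(ℓ₂) = 1 and S(ℓ) = 2. -/
/-- `S ℓ` is the sum of the digits of `ℓ` in base 2. -/
def S (ℓ : ℕ) : ℕ := (Nat.digits 2 ℓ).sum

lemma S_eq (n : ℕ) (h : 0 < n) : S n = n % 2 + S (n / 2) := by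
  unfold S
  rw [Nat.digits_def' (by norm_num) h]
  simp

lemma S_pos (n : ℕ) (h : 0 < n) : 0 < S n := by
  induction n using Nat.strong_induction_on with
  | _ n ih =>
    rw [S_eq n h]
    rcases Nat.mod_two_eq_zero_or_one n with he | ho
    · have := ih (n / 2) (by omega) (by omega)
      omega
    · omega

lemma S_two_mul (n : ℕ) (h : 0 < n) : S (2 * n) = S n := by
  rw [S_eq (2 * n) (by omega)]
  simp [Nat.mul_div_cancel_left n (by norm_num : 0 < 2)]

lemma S_legendre (n : ℕ) : S n = n - padicValNat 2 ((Nat.factorial n)) := by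
  have := @sub_one_mul_padicValNat_factorial 2 ⟨Nat.prime_two⟩ n
  have hd := Nat.digit_sum_le 2 n
  simp [S] at this ⊢
  omega

lemma v_fact_le (n : ℕ) : padicValNat 2 ((Nat.factorial n)) ≤ n := by
  have := @sub_one_mul_padicValNat_factorial 2 ⟨Nat.prime_two⟩ n
  simp at this
  omega

lemma S_add_le (m n : ℕ) : S (m + n) ≤ S m + S n := by
  have key : (m + n).choose n * (Nat.factorial m) * (Nat.factorial n) = (Nat.factorial (m+n)) := Nat.add_choose_mul_factorial_mul_factorial m n
  haveI : Fact (Nat.Prime 2) := ⟨Nat.prime_two⟩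
  have hv : padicValNat 2 ((Nat.factorial (m+n))) =
      padicValNat 2 ((m + n).choose n) + padicValNat 2 (Nat.factorial m) + padicValNat 2 (Nat.factorial n) := by
    have hc : (m + n).choose n ≠ 0 := (Nat.choose_pos (Nat.le_add_left n m)).ne'
    rw [← key, padicValNat.mul (Nat.mul_ne_zero hc (Nat.factorial_ne_zero m)) (Nat.factorial_ne_zero n),
      padicValNat.mul hc (Nat.factorial_ne_zero m)]
  have h1 := v_fact_le m
  have h2 := v_fact_le n
  have h3 := v_fact_le (m + n)
  rw [S_legendre, S_legendre, S_legendre]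
  omega

theorem stmt_5 (ℓ₁ ℓ₂ ℓ : ℕ) (h1 : 0 < ℓ₁) (h2 : 0 < ℓ₂) (hne : ℓ₁ ≠ ℓ₂)
    (hℓ : ℓ = 2 * (ℓ₁ + ℓ₂)) :
    ((S ℓ₁ : ℚ) + (S ℓ₂ : ℚ) - 1 ≤ (S ℓ : ℚ) / 2) ↔
      (S ℓ₁ = 1 ∧ S ℓ₂ = 1 ∧ S ℓ = 2) := by
  have hS : S ℓ = S (ℓ₁ + ℓ₂) := by rw [hℓ, S_two_mul _ (by omega)]
  have hle : S ℓ ≤ S ℓ₁ + S ℓ₂ := hS ▸ S_add_le ℓ₁ ℓ₂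
  have hp1 := S_pos ℓ₁ h1
  have hp2 := S_pos ℓ₂ h2
  have hpℓ : 0 < S ℓ := hS ▸ S_pos _ (by omega)
  constructor
  · intro h
    have h' : (2:ℚ) * (S ℓ₁ + S ℓ₂) ≤ S ℓ + 2 := by linarith
    have h'' : 2 * (S ℓ₁ + S ℓ₂) ≤ S ℓ + 2 := by exact_mod_cast h'
    omega
  · rintro ⟨ha, hb, hc⟩
    rw [ha, hb, hc]
    norm_num
end

section
/- Let n ≥ 3 be an integer and let γ(t) = Σ_{ℓ≥0} c_ℓ t^ℓ be a formal power series over K with c₀ = 1, v(c₂) = n, v(c₁²/c₂ − 2^{n+1}·i) ≥ n + 2, and v(c_ℓ) > n + (1/2)·S(ℓ) for all ℓ ≥ 3. Then there exists a formal power series δ(t) = Σ_{ℓ≥0} d_ℓ t^ℓ over K with δ(t)^{2^{n−2}} = γ(t), d₀ = 1, v(d₂) = 2, v(d₁²/d₂ − 8i) ≥ 4, and v(d_ℓ) > 2 + (1/2)·S(ℓ) for all ℓ ≥ 3. In particular, v(d₁) = 5/2. -/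
open Nat in
lemma S_add_le_s11 (a b : ℕ) : S (a + b) ≤ S a + S b := by
  have legendre (m : ℕ) : padicValNat 2 m ! = m - S m := by
    simpa [S] using sub_one_mul_padicValNat_factorial (p := 2) m
  have hfac : padicValNat 2 (a + b)! =
      padicValNat 2 ((a + b).choose b) + padicValNat 2 a ! + padicValNat 2 b ! := by
    have hchoose : (a + b).choose b ≠ 0 := (choose_pos (Nat.le_add_left b a)).ne'
    rw [← add_choose_mul_factorial_mul_factorial,
      padicValNat.mul (mul_ne_zero hchoose (factorial_ne_zero _)) (factorial_ne_zero _),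
      padicValNat.mul hchoose (factorial_ne_zero _)]
  rw [legendre, legendre, legendre] at hfac
  have := digit_sum_le 2 a
  have := digit_sum_le 2 b
  have := digit_sum_le 2 (a + b)
  unfold S at *
  omega

def coeffBound (n ℓ : ℕ) : ℚ := n + S ℓ / 2 - if ℓ = 2 then 1 / 2 else 0

lemma lt_coeffBound_add {n : ℕ} (hn : 2 ≤ n) (j k : ℕ) :
    n + 1 + S (j + k) / 2 < coeffBound n j + coeffBound n k := by
  have hS : (S (j + k) : ℚ) ≤ S j + S k := by exact_mod_cast S_add_le_s11 j k
  have hn' : (2 : ℚ) ≤ n := by exact_mod_cast hn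
  unfold coeffBound
  by_cases hjk : j = 2 ∧ k = 2
  · obtain ⟨rfl, rfl⟩ := hjk
    norm_num [S]
    linarith
  · have : ((if j = 2 then 1 / 2 else 0) + if k = 2 then 1 / 2 else 0 : ℚ) ≤ 1 / 2 := by
      split_ifs with hj hk hk
      · exact absurd ⟨hj, hk⟩ hjk
      all_goals norm_num
    linarith

section

variable {K : Type*} [Field K]

namespace PowerSeries

noncomputable def sqrtCoeff (γ : K⟦X⟧) : ℕ → K
  | 0 => 1
  | ℓ + 1 => (coeff (ℓ + 1) γ - ∑ j : Fin ℓ, sqrtCoeff γ (j + 1) * sqrtCoeff γ (ℓ - j)) / 2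

noncomputable def sqrt (γ : K⟦X⟧) : K⟦X⟧ := mk (sqrtCoeff γ)

@[simp] lemma coeff_zero_sqrt (γ : K⟦X⟧) : coeff 0 (sqrt γ) = 1 := by
  simp [sqrt, sqrtCoeff]

lemma coeff_succ_sqrt (γ : K⟦X⟧) (ℓ : ℕ) :
    coeff (ℓ + 1) (sqrt γ) = (coeff (ℓ + 1) γ -
      ∑ j ∈ Finset.range ℓ, coeff (j + 1) (sqrt γ) * coeff (ℓ - j) (sqrt γ)) / 2 := by
  simp only [sqrt, coeff_mk]
  rw [sqrtCoeff, Fin.sum_univ_eq_sum_range (fun j => sqrtCoeff γ (j + 1) * sqrtCoeff γ (ℓ - j))]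

lemma sqrt_sq {γ : K⟦X⟧} (h2 : (2 : K) ≠ 0) (hγ : coeff 0 γ = 1) : sqrt γ ^ 2 = γ := by
  ext ℓ
  rcases ℓ with _ | ℓ
  · simp [sq, coeff_mul, hγ]
  · rw [sq, coeff_mul, Finset.Nat.sum_antidiagonal_succ,
      Finset.Nat.sum_antidiagonal_eq_sum_range_succ
        (fun i j => coeff (i + 1) (sqrt γ) * coeff j (sqrt γ)),
      Finset.sum_range_succ, coeff_succ_sqrt]
    simp only [coeff_zero_sqrt, Nat.sub_self]
    field_simp
    ring

lemma coeff_one_sqrt (γ : K⟦X⟧) : coeff 1 (sqrt γ) = coeff 1 γ / 2 := by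
  simpa using coeff_succ_sqrt γ 0

lemma coeff_two_sqrt (γ : K⟦X⟧) : coeff 2 (sqrt γ) = (coeff 2 γ - (coeff 1 γ / 2) ^ 2) / 2 := by
  rw [coeff_succ_sqrt, Finset.sum_range_one, coeff_one_sqrt, sq]

section

variable {γ : K⟦X⟧} (h2 : (2 : K) ≠ 0) (hc2 : coeff 2 γ ≠ 0)
include h2 hc2

lemma coeff_two_sqrt_eq_mul :
    coeff 2 (sqrt γ) = coeff 2 γ * (2 - coeff 1 γ ^ 2 / coeff 2 γ / 2) / 4 := by
  have h4 : (4 : K) ≠ 0 := by simpa [show (4 : K) = 2 ^ 2 by norm_num] using h2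
  rw [coeff_two_sqrt]
  field_simp
  ring

lemma sq_coeff_one_sqrt_div_coeff_two_sqrt :
    coeff 1 (sqrt γ) ^ 2 / coeff 2 (sqrt γ) =
      coeff 1 γ ^ 2 / coeff 2 γ / (2 - coeff 1 γ ^ 2 / coeff 2 γ / 2) := by
  rw [coeff_two_sqrt_eq_mul h2 hc2, coeff_one_sqrt]
  field_simp
  ring

end

end PowerSeries

namespace AddValuation

variable (v : AddValuation K (WithTop ℚ))

lemma map_eq_coe_half_of_map_sq {x : K} {q : ℚ} (h : v (x ^ 2) = q) : v x = ↑(q / 2) := by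
  rw [map_pow] at h
  induction hx : v x using WithTop.recTopCoe with
  | top => simp [hx, two_nsmul] at h
  | coe r =>
    rw [hx, ← WithTop.coe_nsmul, WithTop.coe_inj] at h
    rw [WithTop.coe_inj, ← h]
    simp only [nsmul_eq_mul]
    push_cast
    ring

lemma map_eq_zero_of_sq_eq_neg_one {i : K} (hi : i ^ 2 = -1) : v i = 0 := by
  simpa using v.map_eq_coe_half_of_map_sq (q := 0) (by simp [hi])

lemma ne_zero_of_map_eq_coe {x : K} {q : ℚ} (hx : v x = q) : x ≠ 0 :=
  v.ne_top_iff.1 (hx ▸ WithTop.coe_ne_top)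

variable {v} (hv2 : v 2 = 1)
include hv2

lemma map_two_pow (k : ℕ) : v (2 ^ k) = (k : ℚ) := by
  rw [map_pow, hv2, ← WithTop.coe_one, ← WithTop.coe_nsmul, nsmul_one]

end AddValuation

open PowerSeries

section SqrtCoeffBound

variable {v : AddValuation K (WithTop ℚ)} (hv2 : v 2 = 1) {n : ℕ} {γ : K⟦X⟧}
include hv2

lemma lt_map_coeff_succ_sqrt (hn : 2 ≤ n) {m : ℕ}
    (hlow : ∀ j, 1 ≤ j → j ≤ m → (coeffBound n j : WithTop ℚ) ≤ v (coeff j (sqrt γ)))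
    (hc : ((n + 1 + S (m + 1) / 2 : ℚ) : WithTop ℚ) < v (coeff (m + 1) γ)) :
    ((n + S (m + 1) / 2 : ℚ) : WithTop ℚ) < v (coeff (m + 1) (sqrt γ)) := by
  have hsum : ((n + 1 + S (m + 1) / 2 : ℚ) : WithTop ℚ) <
      v (∑ j ∈ Finset.range m, coeff (j + 1) (sqrt γ) * coeff (m - j) (sqrt γ)) := by
    refine v.map_lt_sum WithTop.coe_ne_top fun j hj => ?_
    have hjm := Finset.mem_range.1 hj
    calc ((n + 1 + S (m + 1) / 2 : ℚ) : WithTop ℚ)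
        < ((coeffBound n (j + 1) + coeffBound n (m - j) : ℚ) : WithTop ℚ) := by
          rw [WithTop.coe_lt_coe, show m + 1 = (j + 1) + (m - j) by omega]
          exact lt_coeffBound_add hn _ _
      _ ≤ v (coeff (j + 1) (sqrt γ) * coeff (m - j) (sqrt γ)) := by
          rw [v.map_mul, WithTop.coe_add]
          exact add_le_add (hlow _ (by omega) (by omega)) (hlow _ (by omega) (by omega))
  have hdiff := lt_of_lt_of_le (lt_min hc hsum) (v.map_sub _ _)
  have h2 : (2 : K) ≠ 0 := v.ne_zero_of_map_eq_coe (q := 1) hv2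
  have hrec : coeff (m + 1) γ -
      ∑ j ∈ Finset.range m, coeff (j + 1) (sqrt γ) * coeff (m - j) (sqrt γ) =
        2 * coeff (m + 1) (sqrt γ) := by
    rw [coeff_succ_sqrt]
    field_simp
  rw [hrec, v.map_mul, hv2,
    show ((n + 1 + S (m + 1) / 2 : ℚ) : WithTop ℚ) = 1 + ((n + S (m + 1) / 2 : ℚ) : WithTop ℚ) by
      rw [← WithTop.coe_one, ← WithTop.coe_add]; congr 1; ring] at hdiff
  exact (add_lt_add_iff_right_of_ne_top WithTop.one_ne_top).1 hdiff

lemma lt_map_coeff_sqrt (hn : 2 ≤ n)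
    (h1 : ((n + 1 / 2 : ℚ) : WithTop ℚ) ≤ v (coeff 1 (sqrt γ)))
    (h2 : ((n : ℚ) : WithTop ℚ) ≤ v (coeff 2 (sqrt γ)))
    (hγ : ∀ ℓ, 3 ≤ ℓ → ((n + 1 + S ℓ / 2 : ℚ) : WithTop ℚ) < v (coeff ℓ γ))
    (ℓ : ℕ) (hℓ : 3 ≤ ℓ) :
    ((n + S ℓ / 2 : ℚ) : WithTop ℚ) < v (coeff ℓ (sqrt γ)) := by
  have hlow : ∀ ℓ, 1 ≤ ℓ → (coeffBound n ℓ : WithTop ℚ) ≤ v (coeff ℓ (sqrt γ)) := by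
    intro ℓ
    induction ℓ using Nat.strong_induction_on with
    | _ ℓ ih =>
      intro hℓ
      match ℓ, hℓ with
      | 1, _ => simpa [coeffBound, S] using h1
      | 2, _ => simpa [coeffBound, S] using h2
      | m + 3, _ =>
        have := lt_map_coeff_succ_sqrt hv2 hn (m := m + 2)
          (fun j hj _ => ih j (by omega) hj) (hγ _ (by omega))
        simpa [coeffBound] using this.le
  obtain ⟨m, rfl⟩ : ∃ m, ℓ = m + 1 := ⟨ℓ - 1, by omega⟩
  exact lt_map_coeff_succ_sqrt hv2 hn (fun j hj _ => hlow j hj) (hγ _ hℓ)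

end SqrtCoeffBound

structure IsOfLevel (v : AddValuation K (WithTop ℚ)) (i : K) (n : ℕ) (γ : K⟦X⟧) : Prop where
  coeff_zero : coeff 0 γ = 1
  map_coeff_two : v (coeff 2 γ) = (n : ℚ)
  le_map_ratio_sub : ((n + 2 : ℚ) : WithTop ℚ) ≤ v (coeff 1 γ ^ 2 / coeff 2 γ - 2 ^ (n + 1) * i)
  lt_map_coeff : ∀ ℓ, 3 ≤ ℓ → ((n + S ℓ / 2 : ℚ) : WithTop ℚ) < v (coeff ℓ γ)

namespace IsOfLevel

variable {v : AddValuation K (WithTop ℚ)} {i : K} {n : ℕ} {γ : K⟦X⟧}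
  (hv2 : v 2 = 1) (hi : i ^ 2 = -1)
include hv2 hi

lemma map_ratio (h : IsOfLevel v i n γ) : v (coeff 1 γ ^ 2 / coeff 2 γ) = (n + 1 : ℚ) := by
  have hT : v (2 ^ (n + 1) * i) = (n + 1 : ℚ) := by
    rw [v.map_mul, AddValuation.map_two_pow hv2, v.map_eq_zero_of_sq_eq_neg_one hi, add_zero]
    push_cast
    rfl
  rw [← hT]
  refine v.map_eq_of_lt_sub (lt_of_lt_of_le ?_ h.le_map_ratio_sub)
  rw [hT, WithTop.coe_lt_coe]
  linarith

lemma map_coeff_one (h : IsOfLevel v i n γ) : v (coeff 1 γ) = (n + 1 / 2 : ℚ) := by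
  have hc2 := v.ne_zero_of_map_eq_coe h.map_coeff_two
  rw [show (n + 1 / 2 : ℚ) = (2 * n + 1) / 2 by ring]
  apply v.map_eq_coe_half_of_map_sq
  rw [← div_mul_cancel₀ (coeff 1 γ ^ 2) hc2, v.map_mul, h.map_ratio hv2 hi, h.map_coeff_two,
    ← WithTop.coe_add]
  congr 1
  ring

lemma map_coeff_one_sqrt (h : IsOfLevel v i (n + 1) γ) :
    v (coeff 1 (sqrt γ)) = (n + 1 / 2 : ℚ) := by
  rw [coeff_one_sqrt, v.map_div, h.map_coeff_one hv2 hi, hv2, ← WithTop.coe_one,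
    ← WithTop.LinearOrderedAddCommGroup.coe_sub]
  congr 1
  push_cast
  ring

lemma map_two_sub_ratio_half (hn : 2 ≤ n) (h : IsOfLevel v i n γ) :
    v (2 - coeff 1 γ ^ 2 / coeff 2 γ / 2) = 1 := by
  rw [← hv2]
  refine v.map_eq_of_lt_sub ?_
  rw [sub_sub_cancel_left, v.map_neg, v.map_div, h.map_ratio hv2 hi, hv2, ← WithTop.coe_one,
    ← WithTop.LinearOrderedAddCommGroup.coe_sub, WithTop.coe_lt_coe]
  have : (2 : ℚ) ≤ n := by exact_mod_cast hn
  linarith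

lemma map_coeff_two_sqrt (hn : 1 ≤ n) (h : IsOfLevel v i (n + 1) γ) :
    v (coeff 2 (sqrt γ)) = (n : ℚ) := by
  have h2 : (2 : K) ≠ 0 := v.ne_zero_of_map_eq_coe (q := 1) hv2
  have hc2 := v.ne_zero_of_map_eq_coe h.map_coeff_two
  rw [coeff_two_sqrt_eq_mul h2 hc2, show (4 : K) = 2 ^ 2 by norm_num, v.map_div, v.map_mul,
    h.map_two_sub_ratio_half hv2 hi (by omega), h.map_coeff_two, AddValuation.map_two_pow hv2,
    ← WithTop.coe_one, ← WithTop.coe_add, ← WithTop.LinearOrderedAddCommGroup.coe_sub]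
  congr 1
  push_cast
  ring

lemma le_map_ratio_sub_sqrt (hn : 1 ≤ n) (h : IsOfLevel v i (n + 1) γ) :
    ((n + 2 : ℚ) : WithTop ℚ) ≤
      v (coeff 1 (sqrt γ) ^ 2 / coeff 2 (sqrt γ) - 2 ^ (n + 1) * i) := by
  have h2 : (2 : K) ≠ 0 := v.ne_zero_of_map_eq_coe (q := 1) hv2
  have hc2 := v.ne_zero_of_map_eq_coe h.map_coeff_two
  have he := h.map_two_sub_ratio_half hv2 hi (by omega)
  have key : (coeff 1 (sqrt γ) ^ 2 / coeff 2 (sqrt γ) - 2 ^ (n + 1) * i) *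
        (2 - coeff 1 γ ^ 2 / coeff 2 γ / 2) =
      (coeff 1 γ ^ 2 / coeff 2 γ - 2 ^ (n + 1 + 1) * i) +
        2 ^ n * i * (coeff 1 γ ^ 2 / coeff 2 γ) := by
    rw [sq_coeff_one_sqrt_div_coeff_two_sqrt h2 hc2, sub_mul,
      div_mul_cancel₀ _ (v.ne_zero_of_map_eq_coe (q := 1) he)]
    field_simp
    ring
  set u := coeff 1 γ ^ 2 / coeff 2 γ
  have hu : v u = ((n + 2 : ℚ) : WithTop ℚ) := by
    rw [h.map_ratio hv2 hi]
    congr 1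
    push_cast
    ring
  have hmain : ((n + 3 : ℚ) : WithTop ℚ) ≤ v (u - 2 ^ (n + 1 + 1) * i) := by
    convert h.le_map_ratio_sub using 2
    push_cast
    ring
  have hcorr : ((n + 3 : ℚ) : WithTop ℚ) ≤ v (2 ^ n * i * u) := by
    rw [v.map_mul, v.map_mul, AddValuation.map_two_pow hv2, v.map_eq_zero_of_sq_eq_neg_one hi,
      hu, add_zero, ← WithTop.coe_add, WithTop.coe_le_coe]
    have : (1 : ℚ) ≤ n := by exact_mod_cast hn
    linarith
  have hsum := v.map_le_add hmain hcorr
  rw [← key, v.map_mul, he, show ((n + 3 : ℚ) : WithTop ℚ) = ((n + 2 : ℚ) : WithTop ℚ) + 1 by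
    rw [← WithTop.coe_one, ← WithTop.coe_add]; congr 1; ring] at hsum
  exact (add_le_add_iff_left_of_ne_top WithTop.one_ne_top).1 hsum

end IsOfLevel

section Iteration

variable {v : AddValuation K (WithTop ℚ)} {i : K} (hv2 : v 2 = 1) (hi : i ^ 2 = -1)
include hv2 hi

theorem isOfLevel_sqrt {n : ℕ} {γ : K⟦X⟧} (hn : 2 ≤ n) (h : IsOfLevel v i (n + 1) γ) :
    IsOfLevel v i n (sqrt γ) where
  coeff_zero := coeff_zero_sqrt γ
  map_coeff_two := h.map_coeff_two_sqrt hv2 hi (by omega)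
  le_map_ratio_sub := h.le_map_ratio_sub_sqrt hv2 hi (by omega)
  lt_map_coeff := lt_map_coeff_sqrt hv2 hn (h.map_coeff_one_sqrt hv2 hi).ge
    (h.map_coeff_two_sqrt hv2 hi (by omega)).ge fun ℓ hℓ => by
      simpa using h.lt_map_coeff ℓ hℓ

theorem exists_pow_two_pow_eq_isOfLevel_two (k : ℕ) {γ : K⟦X⟧} (h : IsOfLevel v i (k + 2) γ) :
    ∃ δ : K⟦X⟧, δ ^ 2 ^ k = γ ∧ IsOfLevel v i 2 δ := by
  induction k generalizing γ with
  | zero => exact ⟨γ, pow_one γ, h⟩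
  | succ k ih =>
    obtain ⟨δ, hδ, hδ2⟩ := ih (isOfLevel_sqrt hv2 hi (by omega) h)
    refine ⟨δ, ?_, hδ2⟩
    rw [pow_succ, pow_mul, hδ, sqrt_sq (v.ne_zero_of_map_eq_coe (q := 1) hv2) h.coeff_zero]

end Iteration

end

theorem stmt_11_general (K : Type*) [Field K] (v : K → WithTop ℚ)
    (hv0 : ∀ x : K, v x = ⊤ ↔ x = 0)
    (hvmul : ∀ x y : K, v (x * y) = v x + v y)
    (hvadd : ∀ x y : K, min (v x) (v y) ≤ v (x + y))
    (hv2 : v 2 = 1)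
    (i : K) (hi : i ^ 2 = -1)
    (n : ℕ) (hn : 3 ≤ n)
    (γ : PowerSeries K)
    (hc0 : PowerSeries.coeff (R := K) 0 γ = 1)
    (hc2 : v (PowerSeries.coeff (R := K) 2 γ) = ((n : ℚ) : WithTop ℚ))
    (hc12 : (((n : ℚ) + 2 : ℚ) : WithTop ℚ) ≤
      v ((PowerSeries.coeff (R := K) 1 γ) ^ 2 / PowerSeries.coeff (R := K) 2 γ - 2 ^ (n + 1) * i))
    (hcl : ∀ ℓ : ℕ, 3 ≤ ℓ →
      (((n : ℚ) + (S ℓ : ℚ) / 2 : ℚ) : WithTop ℚ) < v (PowerSeries.coeff (R := K) ℓ γ)) :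
    ∃ δ : PowerSeries K, δ ^ (2 ^ (n - 2)) = γ ∧
      PowerSeries.coeff (R := K) 0 δ = 1 ∧
      v (PowerSeries.coeff (R := K) 2 δ) = ((2 : ℚ) : WithTop ℚ) ∧
      (((4 : ℚ)) : WithTop ℚ) ≤
        v ((PowerSeries.coeff (R := K) 1 δ) ^ 2 / PowerSeries.coeff (R := K) 2 δ - 8 * i) ∧
      (∀ ℓ : ℕ, 3 ≤ ℓ →
        ((2 + (S ℓ : ℚ) / 2 : ℚ) : WithTop ℚ) < v (PowerSeries.coeff (R := K) ℓ δ)) ∧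
      v (PowerSeries.coeff (R := K) 1 δ) = ((5 / 2 : ℚ) : WithTop ℚ) := by
  have hv1 : v 1 = 0 := by
    have hne : v 1 ≠ ⊤ := fun h => one_ne_zero ((hv0 1).1 h)
    refine (add_left_inj_of_ne_top hne).1 ?_
    rw [zero_add, ← hvmul, one_mul]
  let w : AddValuation K (WithTop ℚ) := .of v ((hv0 0).2 rfl) hv1 hvadd hvmul
  have hγ : IsOfLevel w i (n - 2 + 2) γ := by
    rw [Nat.sub_add_cancel (by omega)]
    exact ⟨hc0, hc2, hc12, hcl⟩
  obtain ⟨δ, hδ, hδ2⟩ := exists_pow_two_pow_eq_isOfLevel_two (v := w) hv2 hi (n - 2) hγ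
  refine ⟨δ, hδ, hδ2.coeff_zero, ?_, ?_, fun ℓ hℓ => ?_, ?_⟩
  · exact_mod_cast hδ2.map_coeff_two
  · convert hδ2.le_map_ratio_sub using 3 <;> norm_num [w]
  · exact_mod_cast hδ2.lt_map_coeff ℓ hℓ
  · convert hδ2.map_coeff_one hv2 hi using 2 <;> norm_num [w]

theorem stmt_11 (K : Type*) [Field K] [CharZero K] (v : K → WithTop ℚ)
    (hv0 : ∀ x : K, v x = ⊤ ↔ x = 0)
    (hvmul : ∀ x y : K, v (x * y) = v x + v y)
    (hvadd : ∀ x y : K, min (v x) (v y) ≤ v (x + y))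
    (hv2 : v 2 = 1)
    (i : K) (hi : i ^ 2 = -1)
    (n : ℕ) (hn : 3 ≤ n)
    (γ : PowerSeries K)
    (hc0 : PowerSeries.coeff (R := K) 0 γ = 1)
    (hc2 : v (PowerSeries.coeff (R := K) 2 γ) = ((n : ℚ) : WithTop ℚ))
    (hc12 : (((n : ℚ) + 2 : ℚ) : WithTop ℚ) ≤
      v ((PowerSeries.coeff (R := K) 1 γ) ^ 2 / PowerSeries.coeff (R := K) 2 γ - 2 ^ (n + 1) * i))
    (hcl : ∀ ℓ : ℕ, 3 ≤ ℓ →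
      (((n : ℚ) + (S ℓ : ℚ) / 2 : ℚ) : WithTop ℚ) < v (PowerSeries.coeff (R := K) ℓ γ)) :
    ∃ δ : PowerSeries K, δ ^ (2 ^ (n - 2)) = γ ∧
      PowerSeries.coeff (R := K) 0 δ = 1 ∧
      v (PowerSeries.coeff (R := K) 2 δ) = ((2 : ℚ) : WithTop ℚ) ∧
      (((4 : ℚ)) : WithTop ℚ) ≤
        v ((PowerSeries.coeff (R := K) 1 δ) ^ 2 / PowerSeries.coeff (R := K) 2 δ - 8 * i) ∧
      (∀ ℓ : ℕ, 3 ≤ ℓ →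
        ((2 + (S ℓ : ℚ) / 2 : ℚ) : WithTop ℚ) < v (PowerSeries.coeff (R := K) ℓ δ)) ∧
      v (PowerSeries.coeff (R := K) 1 δ) = ((5 / 2 : ℚ) : WithTop ℚ) :=
  stmt_11_general K v hv0 hvmul hvadd hv2 i hi n hn γ hc0 hc2 hc12 hcl
end
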